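/- Let R = ℚ[x_1,…,x_n] ⊗ Λ(ω_1,…,ω_n) with the S_n-action s_i(x_j) = x_{s_i(j)}, s_i(ω_j) = ω_j + δ_{ij}(x_i − x_{i+1})ω_{i+1}. Then the elements ω_n^0, ω_n^1, …, ω_n^{n−1} (defined by the recursion ω_k^a = ω_{k−1}^{a−1} − x_k ω_k^{a−1}, ω_k^0 = ω_k, ω_0 = 0) are S_n-invariant. -/
import Mathlib


open MvPolynomial

/-- The transposition `s_i` acting on `ℚ[x_1,x_2,…]` (1-based indices, swapping `x_i, x_{i+1}`). -/
noncomputable def rSwap (i : ℕ) : MvPolynomial ℕ ℚ → MvPolynomial ℕ ℚ :=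
  fun f => rename ⇑(Equiv.swap i (i + 1)) f

/-- Action of `s_i` on the degree-one part `⊕_j ℚ[x]·ω_j` of `R = ℚ[x]⊗Λ(ω)` (1-based
coordinates): `s_i(Σ c_j ω_j) = Σ s_i(c_j)·s_i(ω_j)`, with
`s_i(ω_j) = ω_j + δ_{i,j}(x_i − x_{i+1})·ω_{i+1}`. -/
noncomputable def Sact (i : ℕ) (v : ℕ → MvPolynomial ℕ ℚ) : ℕ → MvPolynomial ℕ ℚ :=
  fun j =>
    (if j = i + 1 then (X i - X (i + 1)) * rSwap i (v i) else 0) + rSwap i (v j)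

/-- The elements `ω_k^a` (coordinates of `ω_k^a` in the basis `ω_1, ω_2, …`; `ω_0 = 0`),
defined by `ω_k^0 = ω_k`, `ω_k^a = ω_{k−1}^{a−1} − x_k·ω_k^{a−1}`. -/
noncomputable def Omega : ℕ → ℕ → ℕ → MvPolynomial ℕ ℚ
  | 0, _ => 0
  | k + 1, 0 => fun j => if j = k + 1 then 1 else 0
  | k + 1, a + 1 => fun j => Omega k a j - X (k + 1) * Omega (k + 1) a j
  termination_by k a => (a, k)

/- ### Auxiliary lemmas -/

lemma succ_succ (q : ℕ) : q + 1 + 1 = q + 2 := rfl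

lemma Omega_zero (a j : ℕ) : Omega 0 a j = 0 := by simp [Omega]
lemma Omega_succ_zero (k j : ℕ) : Omega (k+1) 0 j = if j = k+1 then 1 else 0 := by simp [Omega]
lemma Omega_succ_succ (k a j : ℕ) :
    Omega (k+1) (a+1) j = Omega k a j - X (k+1) * Omega (k+1) a j := by rw [Omega]
lemma Omega_succ_zero' (k j : ℕ) : Omega (k+2) 0 j = if j = k+2 then 1 else 0 :=
  Omega_succ_zero (k+1) j
lemma Omega_succ_succ' (k a j : ℕ) :
    Omega (k+2) (a+1) j = Omega (k+1) a j - X (k+2) * Omega (k+2) a j :=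
  Omega_succ_succ (k+1) a j

lemma rSwap_sub (i : ℕ) (f g : MvPolynomial ℕ ℚ) : rSwap i (f - g) = rSwap i f - rSwap i g :=
  map_sub (rename _) f g
lemma rSwap_mul (i : ℕ) (f g : MvPolynomial ℕ ℚ) : rSwap i (f * g) = rSwap i f * rSwap i g :=
  map_mul (rename _) f g
lemma rSwap_one (i : ℕ) : rSwap i (1 : MvPolynomial ℕ ℚ) = 1 := map_one (rename _)
lemma rSwap_zero (i : ℕ) : rSwap i (0 : MvPolynomial ℕ ℚ) = 0 := map_zero (rename _)
lemma rSwap_X (i k : ℕ) : rSwap i (X k) = X (Equiv.swap i (i+1) k) := rename_X _ k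
lemma rSwap_X_of (i k : ℕ) (h1 : k ≠ i) (h2 : k ≠ i+1) : rSwap i (X k) = X k := by
  rw [rSwap_X, Equiv.swap_apply_of_ne_of_ne h1 h2]
lemma rSwap_X_self (i : ℕ) : rSwap i (X i) = X (i+1) := by rw [rSwap_X, Equiv.swap_apply_left]
lemma rSwap_X_succ (i : ℕ) : rSwap i (X (i+1)) = X i := by rw [rSwap_X, Equiv.swap_apply_right]
lemma rSwap_ite (i : ℕ) (c : Prop) [Decidable c] :
    rSwap i (if c then 1 else 0) = if c then (1 : MvPolynomial ℕ ℚ) else 0 := by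
  split <;> simp [rSwap]

/-- `Omega n a j = 0` for `j > n`. -/
lemma omega_eq_zero (a : ℕ) : ∀ n j, n < j → Omega n a j = 0 := by
  induction a with
  | zero =>
    rintro (_ | k) j h
    · simp [Omega_zero]
    · rw [Omega_succ_zero, if_neg (by omega)]
  | succ a ih =>
    rintro (_ | k) j h
    · simp [Omega_zero]
    · rw [Omega_succ_succ, ih k j (by omega), ih (k+1) j h]; ring

/-- `rSwap i` fixes `Omega n a j` when `n < i`. -/
lemma rSwap_omega_of_lt (i a : ℕ) : ∀ n j, n < i → rSwap i (Omega n a j) = Omega n a j := by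
  induction a with
  | zero =>
    rintro (_ | k) j h
    · rw [Omega_zero, rSwap_zero]
    · rw [Omega_succ_zero, rSwap_ite]
  | succ a ih =>
    rintro (_ | k) j h
    · rw [Omega_zero, rSwap_zero]
    · rw [Omega_succ_succ, rSwap_sub, rSwap_mul, rSwap_X_of _ _ (by omega) (by omega),
        ih k j (by omega), ih (k+1) j h]

/-- `rSwap i` fixes `Omega n a j` when `i + 1 < j`. -/
lemma rSwap_omega_of_gt (i a : ℕ) : ∀ n j, i + 1 < j → rSwap i (Omega n a j) = Omega n a j := by
  induction a with
  | zero =>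
    rintro (_ | k) j h
    · rw [Omega_zero, rSwap_zero]
    · rw [Omega_succ_zero, rSwap_ite]
  | succ a ih =>
    rintro (_ | k) j h
    · rw [Omega_zero, rSwap_zero]
    · rcases lt_or_ge (k+1) j with hk | hk
      · rw [omega_eq_zero _ _ _ hk, rSwap_zero]
      · rw [Omega_succ_succ, rSwap_sub, rSwap_mul, rSwap_X_of _ _ (by omega) (by omega),
          ih k j h, ih (k+1) j h]

/-- Key lemma: the effect of `rSwap (p+1)` on `Omega (p+1) a j` for `j ≤ p+1`. -/
lemma omega_L (p a : ℕ) : ∀ j, j ≤ p + 1 →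
    rSwap (p+1) (Omega (p+1) a j)
      = Omega (p+1) a j + (X (p+1) - X (p+2)) * Omega (p+2) a j := by
  induction a with
  | zero =>
    intro j hj
    rw [Omega_succ_zero p j, rSwap_ite, Omega_succ_zero' p j,
      if_neg (show ¬ j = p + 2 by omega)]
    ring
  | succ a ih =>
    intro j hj
    rw [Omega_succ_succ p a j, Omega_succ_succ' p a j, rSwap_sub, rSwap_mul, rSwap_X_self,
      rSwap_omega_of_lt _ _ _ _ (by omega), ih j hj]
    simp only [succ_succ]
    ring

/-- `rSwap i` fixes `Omega n a j` when `j ≤ i < i + 1 ≤ n`, `1 ≤ i`. -/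
lemma rSwap_omega_sym (i a : ℕ) (hi : 1 ≤ i) : ∀ n j, j ≤ i → i + 1 ≤ n →
    rSwap i (Omega n a j) = Omega n a j := by
  induction a with
  | zero =>
    rintro (_ | k) j hj hn
    · omega
    · rw [Omega_succ_zero, rSwap_ite]
  | succ a ih =>
    rintro (_ | k) j hj hn
    · omega
    · rcases eq_or_lt_of_le hn with he | hl
      · have hik : i = k := by omega
        subst hik
        obtain ⟨p, rfl⟩ : ∃ p, i = p + 1 := ⟨i - 1, by omega⟩
        rw [Omega_succ_succ (p+1) a j, rSwap_sub, rSwap_mul, rSwap_X_succ,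
          omega_L p a j hj, ih (p+2) j hj (by omega)]
        simp only [succ_succ]
        ring
      · rw [Omega_succ_succ, rSwap_sub, rSwap_mul, rSwap_X_of _ _ (by omega) (by omega),
          ih k j hj (by omega), ih (k+1) j hj (by omega)]

/-- A recursion-style identity relating `Omega (p+1) b (p+1)` and `Omega (p+2) b (p+2)`. -/
lemma omega_N (p b : ℕ) :
    Omega (p+1) b (p+1) + (X (p+1) - X (p+2)) * Omega (p+2) b (p+1)
      = Omega (p+2) b (p+2) := by
  induction b with
  | zero =>
    rw [Omega_succ_zero p (p+1), Omega_succ_zero' p (p+1), Omega_succ_zero' p (p+2),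
      if_pos rfl, if_pos rfl, if_neg (by omega)]
    ring
  | succ b ih =>
    rw [Omega_succ_succ p b (p+1), Omega_succ_succ' p b (p+1), Omega_succ_succ' p b (p+2),
      omega_eq_zero b p (p+1) (by omega), omega_eq_zero b (p+1) (p+2) (by omega), ← ih]
    ring

/-- The effect of `rSwap (p+1)` on the "diagonal" coordinate `Omega (p+2) a (p+2)`. -/
lemma omega_M (p a : ℕ) :
    X (p+1) * rSwap (p+1) (Omega (p+2) a (p+2))
      = X (p+2) * Omega (p+2) a (p+2)
        + (X (p+1) - X (p+2)) * Omega (p+2) (a+1) (p+1) := by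
  induction a with
  | zero =>
    rw [Omega_succ_zero' p (p+2), if_pos rfl, rSwap_one,
      Omega_succ_succ' p 0 (p+1), Omega_succ_zero p (p+1), if_pos rfl,
      Omega_succ_zero' p (p+1), if_neg (by omega)]
    ring
  | succ a ih =>
    have hz : Omega (p+1) a (p+2) = 0 := omega_eq_zero a (p+1) (p+2) (by omega)
    have hN := omega_N p (a+1)
    rw [Omega_succ_succ' p a (p+2)] at hN ⊢
    rw [hz] at hN ⊢
    rw [rSwap_sub, rSwap_zero, rSwap_mul, rSwap_X_succ]
    rw [Omega_succ_succ' p (a+1) (p+1)]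
    linear_combination (-X (p+1)) * ih - (X (p+1) - X (p+2)) * hN

/-- The `j = i+1` component of the invariance. -/
lemma omega_P (i : ℕ) (hi : 1 ≤ i) (a : ℕ) : ∀ n, i + 1 ≤ n →
    (X i - X (i+1)) * rSwap i (Omega n a i) + rSwap i (Omega n a (i+1)) = Omega n a (i+1) := by
  induction a with
  | zero =>
    rintro (_ | m) hn
    · omega
    · rw [Omega_succ_zero m i, if_neg (by omega), rSwap_zero,
        Omega_succ_zero m (i+1), rSwap_ite]
      ring
  | succ a ih =>
    rintro (_ | m) hn
    · omega
    · rcases eq_or_lt_of_le hn with he | hl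
      · have him : i = m := by omega
        subst him
        obtain ⟨p, rfl⟩ : ∃ p, i = p + 1 := ⟨i - 1, by omega⟩
        have hA := omega_L p a (p+1) le_rfl
        have hB := rSwap_omega_sym (p+1) a (by omega) (p+2) (p+1) le_rfl (by omega)
        have hM := omega_M p a
        have e1 : Omega (p+2) (a+1) (p+1)
            = Omega (p+1) a (p+1) - X (p+2) * Omega (p+2) a (p+1) := Omega_succ_succ' p a (p+1)
        have e2 : Omega (p+2) (a+1) (p+2) = 0 - X (p+2) * Omega (p+2) a (p+2) := by
          rw [Omega_succ_succ' p a (p+2), omega_eq_zero a (p+1) (p+2) (by omega)]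
        rw [succ_succ, e1, e2, rSwap_sub, rSwap_sub, rSwap_mul, rSwap_mul, rSwap_zero,
          rSwap_X_succ, hA, hB]
        linear_combination (-1 : MvPolynomial ℕ ℚ) * hM - (X (p+1) - X (p+2)) * e1
      · rw [Omega_succ_succ m a i, Omega_succ_succ m a (i+1),
          rSwap_sub, rSwap_sub, rSwap_mul, rSwap_mul,
          rSwap_X_of _ _ (by omega) (by omega)]
        have h1 := ih m (by omega)
        have h2 := ih (m+1) (by omega)
        linear_combination h1 - X (m+1) * h2

/-- The elements `ω_n^0, ω_n^1, …, ω_n^{n−1}` are invariant under the `S_n`-action: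
`s_i(ω_n^a) = ω_n^a` for every simple transposition `s_i`, `1 ≤ i ≤ n−1`. -/
theorem omega_n_invariant (n a : ℕ) (ha : a < n)
    (i : ℕ) (hi : 1 ≤ i) (hin : i + 1 ≤ n) :
    Sact i (Omega n a) = Omega n a := by
  funext j
  show (if j = i + 1 then (X i - X (i+1)) * rSwap i (Omega n a i) else 0)
      + rSwap i (Omega n a j) = Omega n a j
  by_cases hj : j = i + 1
  · subst hj
    rw [if_pos rfl, omega_P i hi a n hin]
  · rw [if_neg hj, zero_add]
    rcases lt_or_ge i j with h | h
    · exact rSwap_omega_of_gt i a n j (by omega)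
    · exact rSwap_omega_sym i a hi n j h hin
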